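/- Let α ∈ S^n ⊂ R^{n+1}, let c > 0, and let k ∈ SO(n+2) be a linear isometry of R^{n+2} fixing the last coordinate (i.e. an element of SO(n+1) acting on the first n+1 coordinates) such that k(α,1) = (0,...,0,1,1). For (p,q) ∈ Z^{n+1} × N lying on the light cone (i.e. ||p||^2 = q^2), write k(p,q) = (x_1,...,x_{n+2}), so x_{n+2} = q. Then ||α - p/q|| < c/q holds if and only if 2 x_{n+2}(x_{n+2} - x_{n+1}) < c^2. -/

import Mathlib

/-- For `α ∈ Sⁿ`, `c > 0`, and a linear isometry `k` of `ℝ^{n+2}` fixing the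
last coordinate with `k(α,1) = (0,…,0,1,1)`, and `(p,q)` an integer point on the light cone
(`‖p‖² = q²`, `q ≥ 1`), writing `k(p,q) = (x₁,…,x_{n+2})`, one has
`‖α - p/q‖ < c/q ↔ 2 x_{n+2}(x_{n+2} - x_{n+1}) < c²`. -/
theorem stmt1 (n : ℕ) (c : ℝ) (hc : 0 < c)
    (α : EuclideanSpace ℝ (Fin (n + 1))) (hα : ‖α‖ = 1)
    (k : EuclideanSpace ℝ (Fin (n + 2)) ≃ₗᵢ[ℝ] EuclideanSpace ℝ (Fin (n + 2)))
    (hk : ∀ x : EuclideanSpace ℝ (Fin (n + 2)), k x (Fin.last (n + 1)) = x (Fin.last (n + 1)))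
    (hkα : k (WithLp.toLp 2 (Fin.snoc α 1 : Fin (n + 2) → ℝ) : EuclideanSpace ℝ (Fin (n + 2)))
        = (fun i : Fin (n + 2) => if (i : ℕ) < n then (0 : ℝ) else 1))
    (p : Fin (n + 1) → ℤ) (q : ℕ) (hq : 1 ≤ q)
    (hcone : (∑ i, (p i : ℝ) ^ 2) = (q : ℝ) ^ 2) :
    ‖α - (q : ℝ)⁻¹ • (show EuclideanSpace ℝ (Fin (n + 1)) from WithLp.toLp 2 (fun i => (p i : ℝ)))‖ < c / q ↔
      2 * (k (WithLp.toLp 2 (Fin.snoc (fun i => (p i : ℝ)) (q : ℝ) : Fin (n + 2) → ℝ) :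
            EuclideanSpace ℝ (Fin (n + 2))) (Fin.last (n + 1))) *
        ((k (WithLp.toLp 2 (Fin.snoc (fun i => (p i : ℝ)) (q : ℝ) : Fin (n + 2) → ℝ) :
            EuclideanSpace ℝ (Fin (n + 2))) (Fin.last (n + 1))) -
         (k (WithLp.toLp 2 (Fin.snoc (fun i => (p i : ℝ)) (q : ℝ) : Fin (n + 2) → ℝ) :
            EuclideanSpace ℝ (Fin (n + 2))) ((Fin.last n).castSucc))) < c ^ 2 := by
  have hq0 : (0:ℝ) < q := by exact_mod_cast hq
  set P : EuclideanSpace ℝ (Fin (n + 2)) :=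
    WithLp.toLp 2 (Fin.snoc (fun i => (p i : ℝ)) (q : ℝ) : Fin (n + 2) → ℝ) with hP
  set A : EuclideanSpace ℝ (Fin (n + 2)) := WithLp.toLp 2 (Fin.snoc α 1 : Fin (n + 2) → ℝ) with hA
  set pv : EuclideanSpace ℝ (Fin (n + 1)) := WithLp.toLp 2 (fun i => (p i : ℝ)) with hpv
  have hxlast : k P (Fin.last (n + 1)) = q := by
    rw [hk]; simp [hP, Fin.snoc_last]
  have hinner : (inner ℝ (k P) (k A) : ℝ) = inner ℝ P A := k.inner_map_map P A
  have hPA : (inner ℝ P A : ℝ) = (∑ i, (p i : ℝ) * α i) + q := by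
    simp only [PiLp.inner_apply, RCLike.inner_apply, conj_trivial]
    rw [Fin.sum_univ_castSucc]
    simp [hP, hA, Fin.snoc_last, Fin.snoc_castSucc]
    exact Finset.sum_congr rfl fun i _ => mul_comm _ _
  have hkPA : (inner ℝ (k P) (k A) : ℝ)
      = k P ((Fin.last n).castSucc) + k P (Fin.last (n + 1)) := by
    simp only [PiLp.inner_apply, RCLike.inner_apply, conj_trivial]
    rw [hkα]
    beta_reduce
    rw [Fin.sum_univ_castSucc, Fin.sum_univ_castSucc]
    have : ∀ i : Fin n, k P (i.castSucc.castSucc) *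
        (if ((i.castSucc.castSucc : Fin (n+2)) : ℕ) < n then (0:ℝ) else 1) = 0 := by
      intro i; simp [i.isLt]
    rw [Finset.sum_congr rfl (fun i _ => (mul_comm _ _).trans (this i))]
    simp
  have hx1 : k P ((Fin.last n).castSucc) = ∑ i, (p i : ℝ) * α i := by
    have := hinner.trans hPA
    rw [hkPA, hxlast] at this
    linarith
  set S : ℝ := ∑ i, (p i : ℝ) * α i with hS
  have hnormsq : ‖α - (q : ℝ)⁻¹ • pv‖ ^ 2 = 2 - 2 * S / q := by
    rw [norm_sub_sq_real]
    have h1 : ‖α‖ ^ 2 = 1 := by rw [hα]; ring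
    have h2 : (inner ℝ α ((q : ℝ)⁻¹ • pv) : ℝ) = S / q := by
      rw [inner_smul_right]
      simp only [PiLp.inner_apply, RCLike.inner_apply, conj_trivial]
      rw [hS]
      rw [div_eq_inv_mul]
    have h3 : ‖(q : ℝ)⁻¹ • pv‖ ^ 2 = 1 := by
      rw [norm_smul]
      have : ‖pv‖ ^ 2 = (q:ℝ)^2 := by
        rw [← hcone, hpv, EuclideanSpace.norm_eq]
        rw [Real.sq_sqrt (by positivity)]
        exact Finset.sum_congr rfl fun i _ => by
          rw [Real.norm_eq_abs, sq_abs]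
      have hpvn : ‖pv‖ = q := by
        nlinarith [norm_nonneg pv, hq0]
      rw [hpvn]
      simp [abs_of_pos (inv_pos.mpr hq0)]
      field_simp
      simp
    rw [h1, h2, h3]; ring
  have hdiv : 2 - 2 * S / q = (2 * (q:ℝ) * ((q:ℝ) - S)) / (q:ℝ)^2 := by
    field_simp
  have hiff2 : ‖α - (q : ℝ)⁻¹ • pv‖ ^ 2 < (c / q) ^ 2 ↔ 2 * (q:ℝ) * ((q:ℝ) - S) < c ^ 2 := by
    rw [hnormsq, hdiv, div_pow, div_lt_div_iff₀ (by positivity) (by positivity),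
      mul_lt_mul_iff_of_pos_right (by positivity : (0:ℝ) < (q:ℝ)^2)]
  have key : ‖α - (q : ℝ)⁻¹ • pv‖ < c / q ↔ 2 * (q:ℝ) * ((q:ℝ) - S) < c ^ 2 := by
    have hcq : (0:ℝ) < c / q := by positivity
    rw [← hiff2]
    constructor
    · intro h
      exact pow_lt_pow_left₀ h (norm_nonneg _) two_ne_zero
    · intro h
      exact lt_of_pow_lt_pow_left₀ 2 hcq.le h
  rw [key, hxlast, hx1]
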